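/- arXiv:1412.4293 — 2 statements merged into one kernel-verified Lean document; each statement's English description precedes it below -/
import Mathlib

section
/- Let X be a complete metric space and (S_t)_{t≥0} a family of maps S_t : X → X satisfying: (S1) S₀ = id; (S2) S_{t+τ} = S_t ∘ S_τ; and (S3) for each t, if x_n → x and S_t x_n → y then S_t x = y (closedness). Suppose there exists a compact set K ⊆ X that is absorbing: for every bounded set B there is t₀(B) with S_t B ⊆ K for all t ≥ t₀(B). Then the omega-limit set A = ω(K) = ⋂_{t≥0} closure(⋃_{τ≥t} S_τ K) is a nonempty compact set that is invariant (S_t A = A for all t ≥ 0) and attracts every bounded set: for every bounded B, sup_{x∈B} dist(S_t x, A) → 0 as t → ∞. -/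
open Set Filter Topology

set_option maxHeartbeats 1600000 in
/-- Pata–Zelik: a closed semigroup on a complete metric space with a
compact absorbing set `K` has a global attractor `A = ω(K)`: nonempty, compact,
invariant, and attracting all bounded sets. -/
theorem closed_semigroup_global_attractor
    {X : Type*} [MetricSpace X] [CompleteSpace X] [Nonempty X]
    (S : ℝ → X → X)
    (hS0 : S 0 = id)
    (hSadd : ∀ t τ : ℝ, 0 ≤ t → 0 ≤ τ → S (t + τ) = S t ∘ S τ)
    (hclosed : ∀ t : ℝ, 0 ≤ t → ∀ (x : ℕ → X) (x₀ y : X),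
      Tendsto x atTop (𝓝 x₀) → Tendsto (fun n => S t (x n)) atTop (𝓝 y) →
      S t x₀ = y)
    (K : Set X) (hK : IsCompact K)
    (habs : ∀ B : Set X, Bornology.IsBounded B →
      ∃ t₀ : ℝ, ∀ t, t₀ ≤ t → S t '' B ⊆ K) :
    ∃ A : Set X,
      A = (⋂ t ∈ Ici (0:ℝ), closure (⋃ τ ∈ Ici t, S τ '' K)) ∧
      A.Nonempty ∧ IsCompact A ∧
      (∀ t : ℝ, 0 ≤ t → S t '' A = A) ∧
      (∀ B : Set X, Bornology.IsBounded B →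
        Tendsto (fun t : ℝ => ⨆ x : B, Metric.infDist (S t x.1) A) atTop (𝓝 0)) := by
  classical
  -- an absorbing time for K itself
  obtain ⟨tK₀, htK₀⟩ := habs K hK.isBounded
  set tK : ℝ := max tK₀ 0 with htKdef
  have htK0 : (0:ℝ) ≤ tK := le_max_right _ _
  have htK : ∀ t, tK ≤ t → S t '' K ⊆ K := fun t ht =>
    htK₀ t ((le_max_left _ _).trans ht)
  -- K is nonempty
  obtain ⟨x₀⟩ := (inferInstance : Nonempty X)
  have hKne : K.Nonempty := by
    obtain ⟨t₀, ht₀⟩ := habs {x₀} Bornology.isBounded_singleton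
    exact ⟨S (max t₀ 0) x₀, ht₀ _ (le_max_left _ _) ⟨x₀, mem_singleton _, rfl⟩⟩
  -- the tail sets and the omega-limit set
  set W : ℝ → Set X := fun t => ⋃ τ ∈ Ici t, S τ '' K with hWdef
  set A : Set X := ⋂ t ∈ Ici (0:ℝ), closure (W t) with hAdef
  have hmemW : ∀ {t τ : ℝ} {x : X}, t ≤ τ → x ∈ K → S τ x ∈ W t := by
    intro t τ x h hx
    exact mem_iUnion₂.2 ⟨τ, h, ⟨x, hx, rfl⟩⟩
  -- A ⊆ K
  have hAsub : A ⊆ K := by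
    intro y hy
    have hy' : y ∈ closure (W tK) := mem_iInter₂.1 hy tK htK0
    have hWK : W tK ⊆ K := by
      intro z hz
      obtain ⟨τ, hτ, x, hx, rfl⟩ := mem_iUnion₂.1 hz
      exact htK τ hτ ⟨x, hx, rfl⟩
    exact hK.isClosed.closure_subset_iff.2 hWK hy'
  -- sequential characterization of A
  have seqchar : ∀ y : X,
      y ∈ A ↔ ∃ (t : ℕ → ℝ) (x : ℕ → X), (∀ n, x n ∈ K) ∧
        Tendsto t atTop atTop ∧ Tendsto (fun n => S (t n) (x n)) atTop (𝓝 y) := by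
    intro y
    constructor
    · intro hy
      have h : ∀ n : ℕ, ∃ (τ : ℝ) (x : X), (n:ℝ) ≤ τ ∧ x ∈ K ∧
          dist y (S τ x) < 1/(n+1) := by
        intro n
        have hyc : y ∈ closure (W (n:ℝ)) := mem_iInter₂.1 hy _ (mem_Ici.2 (by positivity))
        rw [Metric.mem_closure_iff] at hyc
        obtain ⟨b, hb, hdb⟩ := hyc (1/(n+1)) (by positivity)
        obtain ⟨τ, hτ, x, hx, rfl⟩ := mem_iUnion₂.1 hb
        exact ⟨τ, x, hτ, hx, hdb⟩
      choose t x ht hx hd using h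
      refine ⟨t, x, hx, tendsto_atTop_mono ht tendsto_natCast_atTop_atTop, ?_⟩
      rw [tendsto_iff_dist_tendsto_zero]
      refine squeeze_zero (fun n => dist_nonneg) (fun n => ?_)
        tendsto_one_div_add_atTop_nhds_zero_nat
      rw [dist_comm]; exact (hd n).le
    · rintro ⟨t, x, hx, htt, hconv⟩
      refine mem_iInter₂.2 fun s hs => ?_
      refine mem_closure_of_tendsto hconv ?_
      filter_upwards [htt.eventually_ge_atTop s] with n hn
      exact hmemW hn (hx n)
  -- compactness extraction: any sequence S (t n) (x n), x n ∈ K, t n → ∞ has a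
  -- subsequence converging to a point of A
  have subA : ∀ (t : ℕ → ℝ) (x : ℕ → X), (∀ n, x n ∈ K) → Tendsto t atTop atTop →
      ∃ (ψ : ℕ → ℕ) (y : X), Tendsto ψ atTop atTop ∧ y ∈ A ∧
        Tendsto (fun n => S (t (ψ n)) (x (ψ n))) atTop (𝓝 y) := by
    intro t x hx htt
    obtain ⟨N, hN⟩ := eventually_atTop.1 (htt.eventually_ge_atTop tK)
    have hu : ∀ n : ℕ, S (t (n + N)) (x (n + N)) ∈ K := fun n =>
      htK _ (hN _ (Nat.le_add_left N n)) ⟨x (n + N), hx _, rfl⟩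
    obtain ⟨y, hyK, φ, hφ, hconv⟩ := hK.tendsto_subseq hu
    have hψ : Tendsto (fun n => φ n + N) atTop atTop :=
      tendsto_atTop_mono (fun n => Nat.le_add_right (φ n) N) hφ.tendsto_atTop
    refine ⟨fun n => φ n + N, y, hψ, ?_, hconv⟩
    exact (seqchar y).2 ⟨fun n => t (φ n + N), fun n => x (φ n + N),
      fun n => hx _, htt.comp hψ, hconv⟩
  -- A nonempty
  obtain ⟨k0, hk0⟩ := hKne
  obtain ⟨ψ0, y0, -, hy0A, -⟩ := subA (fun n => (n:ℝ)) (fun _ => k0)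
    (fun _ => hk0) tendsto_natCast_atTop_atTop
  have hAne : A.Nonempty := ⟨y0, hy0A⟩
  -- A compact
  have hAclosed : IsClosed A := isClosed_biInter fun t _ => isClosed_closure
  have hAcomp : IsCompact A := hK.of_isClosed_subset hAclosed hAsub
  -- invariance
  have hinv : ∀ t : ℝ, 0 ≤ t → S t '' A = A := by
    intro t ht
    apply Subset.antisymm
    · rintro _ ⟨a, haA, rfl⟩
      obtain ⟨τ, x, hx, hτt, hconv⟩ := (seqchar a).1 haA
      obtain ⟨ψ, y, hψ, hyA, hconv2⟩ := subA (fun n => t + τ n) x hx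
        (tendsto_atTop_add_const_left _ t hτt)
      have h1 : Tendsto (fun n => S (τ (ψ n)) (x (ψ n))) atTop (𝓝 a) := hconv.comp hψ
      have heq : (fun n => S t (S (τ (ψ n)) (x (ψ n)))) =ᶠ[atTop]
          (fun n => S (t + τ (ψ n)) (x (ψ n))) := by
        filter_upwards [(hτt.comp hψ).eventually_ge_atTop 0] with n hn
        rw [hSadd t (τ (ψ n)) ht hn]; rfl
      have h2 : Tendsto (fun n => S t (S (τ (ψ n)) (x (ψ n)))) atTop (𝓝 y) :=
        hconv2.congr' heq.symm
      have hfin := hclosed t ht _ a y h1 h2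
      rw [hfin]; exact hyA
    · intro a haA
      obtain ⟨τ, x, hx, hτt, hconv⟩ := (seqchar a).1 haA
      have hτt' : Tendsto (fun n => τ n - t) atTop atTop := by
        simpa [sub_eq_add_neg] using tendsto_atTop_add_const_right atTop (-t) hτt
      obtain ⟨ψ, b, hψ, hbA, hconvb⟩ := subA (fun n => τ n - t) x hx hτt'
      have h1 : Tendsto (fun n => S (τ (ψ n)) (x (ψ n))) atTop (𝓝 a) := hconv.comp hψ
      have heq : (fun n => S t (S (τ (ψ n) - t) (x (ψ n)))) =ᶠ[atTop]
          (fun n => S (τ (ψ n)) (x (ψ n))) := by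
        filter_upwards [(hτt.comp hψ).eventually_ge_atTop t] with n hn
        have h2 := hSadd t (τ (ψ n) - t) ht (sub_nonneg.2 hn)
        have h3 : t + (τ (ψ n) - t) = τ (ψ n) := by ring
        have h4 := congrFun h2 (x (ψ n))
        rw [h3] at h4
        exact h4.symm
      have h2 : Tendsto (fun n => S t (S (τ (ψ n) - t) (x (ψ n)))) atTop (𝓝 a) :=
        h1.congr' heq.symm
      have hfin := hclosed t ht (fun n => S (τ (ψ n) - t) (x (ψ n))) b a hconvb h2
      exact ⟨b, hbA, hfin⟩
  -- uniform attraction of K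
  have hattrK : ∀ ε : ℝ, 0 < ε → ∃ T : ℝ, ∀ t, T ≤ t → ∀ k ∈ K,
      Metric.infDist (S t k) A < ε := by
    intro ε hε
    by_contra hcon
    push_neg at hcon
    have h : ∀ n : ℕ, ∃ t : ℝ, (n:ℝ) ≤ t ∧ ∃ k ∈ K,
        ε ≤ Metric.infDist (S t k) A := fun n => hcon n
    choose t ht k hk hbig using h
    obtain ⟨ψ, y, hψ, hyA, hconv⟩ := subA t k hk
      (tendsto_atTop_mono ht tendsto_natCast_atTop_atTop)
    have hlim : Tendsto (fun n => Metric.infDist (S (t (ψ n)) (k (ψ n))) A) atTop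
        (𝓝 (Metric.infDist y A)) :=
      ((Metric.continuous_infDist_pt A).tendsto y).comp hconv
    have hle : ε ≤ Metric.infDist y A := ge_of_tendsto' hlim fun n => hbig (ψ n)
    rw [Metric.infDist_zero_of_mem hyA] at hle
    linarith
  -- attraction of all bounded sets
  have hattr : ∀ B : Set X, Bornology.IsBounded B →
      Tendsto (fun t : ℝ => ⨆ x : B, Metric.infDist (S t x.1) A) atTop (𝓝 0) := by
    intro B hB
    obtain ⟨t₀', ht₀'⟩ := habs B hB
    set t₀ : ℝ := max t₀' 0 with ht₀def
    have ht₀0 : (0:ℝ) ≤ t₀ := le_max_right _ _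
    have ht₀ : ∀ t, t₀ ≤ t → S t '' B ⊆ K := fun t ht =>
      ht₀' t ((le_max_left _ _).trans ht)
    rw [Metric.tendsto_atTop]
    intro ε hε
    obtain ⟨T, hT⟩ := hattrK (ε/2) (by linarith)
    refine ⟨t₀ + max T 0 + 1, fun t hturn => ?_⟩
    have hsub0 : 0 ≤ t - t₀ := by
      have := le_max_right T 0; linarith
    have hsubT : T ≤ t - t₀ := by
      have := le_max_left T 0; linarith
    have h1 : ∀ x : B, Metric.infDist (S t x.1) A ≤ ε/2 := by
      rintro ⟨x, hx⟩
      have hx1 : S t₀ x ∈ K := ht₀ t₀ le_rfl ⟨x, hx, rfl⟩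
      have h2 := hSadd (t - t₀) t₀ hsub0 ht₀0
      have h3 : (t - t₀) + t₀ = t := by ring
      have h4 := congrFun h2 x
      rw [h3] at h4
      have h5 : S t x = S (t - t₀) (S t₀ x) := h4
      rw [h5]
      exact (hT (t - t₀) hsubT _ hx1).le
    have hle : (⨆ x : B, Metric.infDist (S t x.1) A) ≤ ε/2 :=
      Real.iSup_le h1 (by linarith)
    have hge : 0 ≤ ⨆ x : B, Metric.infDist (S t x.1) A :=
      Real.iSup_nonneg fun x => Metric.infDist_nonneg
    rw [Real.dist_eq, sub_zero, abs_of_nonneg hge]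
    linarith
  exact ⟨A, rfl, hAne, hAcomp, hinv, hattr⟩
end

section
/- Let Y be a Banach space, M ⊆ Y a bounded closed set, and V : M → Y a map with M ⊆ V(M). Suppose there exist a Banach space Z, a Lipschitz map K : M → Z with Lipschitz constant L_K, a seminorm n_Z on Z that is compact (i.e., n_Z is bounded on bounded sets and from every bounded sequence in Z one can extract a subsequence Cauchy in n_Z), and a constant 0 < γ < 1 such that ‖Vv¹ - Vv²‖ ≤ γ‖v¹-v²‖ + n_Z(Kv¹ - Kv²) for all v¹,v² ∈ M. Then M is compact and has finite fractal (box-counting) dimension, with dim_f M ≤ [ln(2/(1+γ))]^{-1} · ln m_Z(4L_K/(1-γ)), where m_Z(R) is the maximal number of elements z_i in the ball {z ∈ Z : ‖z‖_Z ≤ R} such that n_Z(z_i - z_j) > 1 for i ≠ j. -/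
open Set Filter Topology

/-- Minimal number of closed `ε`-balls needed to cover `M` (`⊤` if no finite cover). -/
noncomputable def covN {X : Type*} [MetricSpace X] (M : Set X) (ε : ℝ) : ℕ∞ :=
  ⨅ (s : Finset X) (_ : M ⊆ ⋃ x ∈ s, Metric.closedBall x ε), (s.card : ℕ∞)

/-- Fractal (box-counting) dimension: `limsup_{ε→0⁺} ln n(M,ε) / ln(1/ε)`. -/
noncomputable def fractalDim {X : Type*} [MetricSpace X] (M : Set X) : ℝ :=
  limsup (fun ε : ℝ => Real.log ((covN M ε).toNat : ℝ) / Real.log (1 / ε))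
    (nhdsWithin 0 (Ioi 0))

/-- `mZ nZ R`: maximal number of points in the closed `R`-ball of `Z` that are pairwise
separated by more than `1` in the seminorm `nZ`. -/
noncomputable def mZ {Z : Type*} [NormedAddCommGroup Z] (nZ : Z → ℝ) (R : ℝ) : ℕ∞ :=
  ⨆ (s : Finset Z) (_ : (∀ z ∈ s, ‖z‖ ≤ R) ∧
      ∀ z ∈ s, ∀ w ∈ s, z ≠ w → 1 < nZ (z - w)), (s.card : ℕ∞)

section Aux

lemma net_exists {Z : Type*} [NormedAddCommGroup Z] [NormedSpace ℝ Z]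
    (nZ : Seminorm ℝ Z)
    (hcomp : ∀ (z : ℕ → Z) (c : ℝ), (∀ n, ‖z n‖ ≤ c) →
      ∃ σ : ℕ → ℕ, StrictMono σ ∧
        ∀ ε : ℝ, 0 < ε → ∃ N, ∀ m, N ≤ m → ∀ n, N ≤ n → nZ (z (σ m) - z (σ n)) < ε)
    (R : ℝ) :
    ∃ F : Finset Z, ∀ z : Z, ‖z‖ ≤ R → ∃ w ∈ F, nZ (z - w) ≤ 1/2 := by
  classical
  by_contra h
  push_neg at h
  choose f hf1 hf2 using h
  let g : ℕ → Finset Z := fun n => Nat.rec ∅ (fun _ F => insert (f F) F) n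
  let z : ℕ → Z := fun n => f (g n)
  have hg : ∀ n, g (n+1) = insert (z n) (g n) := fun n => rfl
  have hmono : ∀ i j, i ≤ j → g i ⊆ g j := by
    intro i j hij
    induction j with
    | zero => simp [Nat.le_zero.mp hij]
    | succ j ih =>
      rcases Nat.le_succ_iff_eq_or_le.mp hij with h' | h'
      · simp [h']
      · exact (ih h').trans (by rw [hg]; exact Finset.subset_insert _ _)
  have hmem : ∀ i j, i < j → z i ∈ g j := by
    intro i j hij
    exact hmono (i+1) j hij (by rw [hg]; exact Finset.mem_insert_self _ _)
  have hsep : ∀ i j, i ≠ j → 1/2 < nZ (z i - z j) := by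
    intro i j hij
    rcases hij.lt_or_gt with h' | h'
    · rw [map_sub_rev]; exact hf2 (g j) (z i) (hmem i j h')
    · exact hf2 (g i) (z j) (hmem j i h')
  obtain ⟨σ, hσ, hc⟩ := hcomp z R (fun n => hf1 (g n))
  obtain ⟨N, hN⟩ := hc (1/2) (by norm_num)
  have h1 := hN N le_rfl (N+1) (Nat.le_succ N)
  have h2 := hsep (σ N) (σ (N+1)) (hσ.injective.ne (Nat.lt_succ_self N).ne)
  linarith

variable {Z : Type*} [NormedAddCommGroup Z] [NormedSpace ℝ Z]
  (nZ : Seminorm ℝ Z) (R : ℝ)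

lemma sep_card_le {F : Finset Z}
    (hF : ∀ z : Z, ‖z‖ ≤ R → ∃ w ∈ F, nZ (z - w) ≤ 1/2)
    (s : Finset Z) (hs1 : ∀ z ∈ s, ‖z‖ ≤ R)
    (hs2 : ∀ z ∈ s, ∀ w ∈ s, z ≠ w → 1 < nZ (z - w)) : s.card ≤ F.card := by
  have hφ : ∀ z ∈ s, ∃ w ∈ F, nZ (z - w) ≤ 1/2 := fun z hz => hF z (hs1 z hz)
  choose! φ hφF hφd using hφ
  refine Finset.card_le_card_of_injOn φ (fun z hz => hφF z hz) ?_
  intro a ha b hb hab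
  by_contra hne
  have h1 : nZ (a - b) ≤ nZ (a - φ a) + nZ (φ b - b) := by
    have : a - b = (a - φ a) + (φ b - b) := by rw [hab]; abel
    rw [this]; exact map_add_le_add nZ _ _
  have h2 : nZ (φ b - b) ≤ 1/2 := by rw [map_sub_rev]; exact hφd b hb
  have := hs2 a ha b hb hne
  have := hφd a ha
  linarith

lemma mZ_ne_top {F : Finset Z}
    (hF : ∀ z : Z, ‖z‖ ≤ R → ∃ w ∈ F, nZ (z - w) ≤ 1/2) :
    mZ (fun z => nZ z) R ≠ ⊤ := by
  have : mZ (fun z => nZ z) R ≤ (F.card : ℕ∞) := by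
    refine iSup₂_le ?_
    intro s hs
    exact_mod_cast Nat.cast_le.mpr (sep_card_le nZ R hF s hs.1 hs.2)
  exact (this.trans_lt (by exact_mod_cast ENat.coe_lt_top F.card)).ne

lemma sep_card_le_mZ (hne : mZ (fun z => nZ z) R ≠ ⊤)
    (s : Finset Z) (hs1 : ∀ z ∈ s, ‖z‖ ≤ R)
    (hs2 : ∀ z ∈ s, ∀ w ∈ s, z ≠ w → 1 < nZ (z - w)) :
    s.card ≤ (mZ (fun z => nZ z) R).toNat := by
  have h1 : (s.card : ℕ∞) ≤ mZ (fun z => nZ z) R :=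
    le_iSup₂ (f := fun (s : Finset Z) (_ : (∀ z ∈ s, ‖z‖ ≤ R) ∧
      ∀ z ∈ s, ∀ w ∈ s, z ≠ w → 1 < nZ (z - w)) => (s.card : ℕ∞)) s ⟨hs1, hs2⟩
  have := ENat.toNat_le_toNat h1 hne
  simpa using this

lemma exists_max_sep {F : Finset Z}
    (hF : ∀ z : Z, ‖z‖ ≤ R → ∃ w ∈ F, nZ (z - w) ≤ 1/2)
    (S : Set Z) (hS : ∀ z ∈ S, ‖z‖ ≤ R) :
    ∃ T : Finset Z, ↑T ⊆ S ∧
      (∀ z ∈ T, ∀ w ∈ T, z ≠ w → 1 < nZ (z - w)) ∧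
      T.card ≤ (mZ (fun z => nZ z) R).toNat ∧
      ∀ z ∈ S, ∃ w ∈ T, nZ (z - w) ≤ 1 := by
  classical
  set A : Set ℕ := {k | ∃ T : Finset Z, ↑T ⊆ S ∧
      (∀ z ∈ T, ∀ w ∈ T, z ≠ w → 1 < nZ (z - w)) ∧ T.card = k} with hA
  have h0 : (0 : ℕ) ∈ A := ⟨∅, by simp⟩
  have hbdd : BddAbove A := by
    refine ⟨F.card, ?_⟩
    rintro k ⟨T, hTS, hTsep, rfl⟩
    exact sep_card_le nZ R hF T (fun z hz => hS z (hTS hz)) hTsep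
  obtain ⟨T, hTS, hTsep, hTcard⟩ := Nat.sSup_mem ⟨0, h0⟩ hbdd
  refine ⟨T, hTS, hTsep,
    sep_card_le_mZ nZ R (mZ_ne_top nZ R hF) T (fun z hz => hS z (hTS hz)) hTsep, ?_⟩
  intro z hz
  by_contra hcon
  push_neg at hcon
  have hzT : z ∉ T := fun h => absurd (hcon z h) (by simp)
  have : T.card + 1 ∈ A := by
    refine ⟨insert z T, ?_, ?_, by rw [Finset.card_insert_of_notMem hzT]⟩
    · intro a ha
      rcases Finset.mem_insert.mp ha with rfl | h'
      · exact hz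
      · exact hTS h'
    · intro a ha b hb hab
      rcases Finset.mem_insert.mp ha with rfl | ha' <;>
        rcases Finset.mem_insert.mp hb with rfl | hb'
      · exact absurd rfl hab
      · exact hcon b hb'
      · rw [map_sub_rev]; exact hcon a ha'
      · exact hTsep a ha' b hb' hab
  have := le_csSup hbdd this
  rw [hTcard] at this
  omega

end Aux

section CovN
variable {Y : Type*} [NormedAddCommGroup Y] [NormedSpace ℝ Y]

omit [NormedSpace ℝ Y] in
lemma ball_cover_of_cover (M : Set Y) {ε d : ℝ} (hdε : d ≤ ε) (n : ℕ)
    (E : Fin n → Set Y) (hcov : M ⊆ ⋃ i, E i)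
    (hdiam : ∀ i, ∀ u ∈ E i, ∀ v ∈ E i, ‖u - v‖ ≤ d) :
    ∃ s : Finset Y, s.card ≤ n ∧ M ⊆ ⋃ x ∈ s, Metric.closedBall x ε := by
  classical
  have hc : ∀ i : Fin n, ∃ c : Y, (E i).Nonempty → c ∈ E i := by
    intro i
    by_cases h : (E i).Nonempty
    · exact ⟨h.choose, fun _ => h.choose_spec⟩
    · exact ⟨0, fun h' => absurd h' h⟩
  choose c hcmem using hc
  refine ⟨Finset.image c Finset.univ, (Finset.card_image_le).trans (by simp), ?_⟩
  intro x hx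
  obtain ⟨i, hxi⟩ : ∃ i, x ∈ E i := by simpa using hcov hx
  have hci : c i ∈ E i := hcmem i ⟨x, hxi⟩
  refine mem_iUnion₂.mpr ⟨c i, by simp [Finset.mem_image], ?_⟩
  rw [Metric.mem_closedBall, dist_eq_norm]
  exact (hdiam i x hxi (c i) hci).trans hdε

omit [NormedSpace ℝ Y] in
lemma covN_le_of_cover (M : Set Y) {ε d : ℝ} (hdε : d ≤ ε) (n : ℕ)
    (E : Fin n → Set Y) (hcov : M ⊆ ⋃ i, E i)
    (hdiam : ∀ i, ∀ u ∈ E i, ∀ v ∈ E i, ‖u - v‖ ≤ d) :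
    covN M ε ≤ (n : ℕ∞) := by
  obtain ⟨s, hsc, hscov⟩ := ball_cover_of_cover M hdε n E hcov hdiam
  calc covN M ε ≤ (s.card : ℕ∞) := iInf₂_le s hscov
    _ ≤ (n : ℕ∞) := by exact_mod_cast hsc

omit [NormedSpace ℝ Y] in
lemma one_le_covN (M : Set Y) (hM : M.Nonempty) (ε : ℝ) : 1 ≤ covN M ε := by
  refine le_iInf fun s => le_iInf fun hs => ?_
  obtain ⟨x, hx⟩ := hM
  have : s.Nonempty := by
    obtain ⟨y, hy, -⟩ := mem_iUnion₂.mp (hs hx)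
    exact ⟨y, hy⟩
  exact_mod_cast Nat.one_le_cast.mpr (Finset.card_pos.mpr this)

end CovN

section Step
variable {Y Z : Type*} [NormedAddCommGroup Y] [NormedSpace ℝ Y]
  [NormedAddCommGroup Z] [NormedSpace ℝ Z]

omit [NormedSpace ℝ Y] in
lemma step_lemma (M : Set Y) (V : Y → Y) (hMV : M ⊆ V '' M)
    (K : Y → Z) (L_K : ℝ) (hLK : 0 ≤ L_K)
    (hKlip : ∀ u ∈ M, ∀ v ∈ M, ‖K u - K v‖ ≤ L_K * ‖u - v‖)
    (nZ : Seminorm ℝ Z) (γ : ℝ) (hγ0 : 0 < γ) (hγ1 : γ < 1)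
    (hqs : ∀ v1 ∈ M, ∀ v2 ∈ M, ‖V v1 - V v2‖ ≤ γ * ‖v1 - v2‖ + nZ (K v1 - K v2))
    (m : ℕ)
    (hmax : ∀ S : Set Z, (∀ z ∈ S, ‖z‖ ≤ 4 * L_K / (1 - γ)) →
      ∃ T : Finset Z, T.card ≤ m ∧ ∀ z ∈ S, ∃ w ∈ T, nZ (z - w) ≤ 1)
    (d : ℝ) (hd : 0 < d) (n : ℕ) (E : Fin n → Set Y)
    (hcov : M ⊆ ⋃ i, E i) (hsub : ∀ i, E i ⊆ M)
    (hdiam : ∀ i, ∀ u ∈ E i, ∀ v ∈ E i, ‖u - v‖ ≤ d) :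
    ∃ E' : Fin n × Fin m → Set Y, M ⊆ ⋃ p, E' p ∧ (∀ p, E' p ⊆ M) ∧
      ∀ p, ∀ u ∈ E' p, ∀ v ∈ E' p, ‖u - v‖ ≤ (1 + γ)/2 * d := by
  classical
  set δ : ℝ := (1 - γ) * d / 4 with hδ
  have h1γ : 0 < 1 - γ := by linarith
  have hδ0 : 0 < δ := by positivity
  have hc : ∀ i : Fin n, ∃ c : Y, (E i).Nonempty → c ∈ E i := by
    intro i
    by_cases h : (E i).Nonempty
    · exact ⟨h.choose, fun _ => h.choose_spec⟩
    · exact ⟨0, fun h' => absurd h' h⟩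
  choose c hcmem using hc
  set S : Fin n → Set Z := fun i => (fun u => δ⁻¹ • (K u - K (c i))) '' (E i) with hS
  have hSball : ∀ i, ∀ z ∈ S i, ‖z‖ ≤ 4 * L_K / (1 - γ) := by
    intro i z hz
    obtain ⟨u, hu, rfl⟩ := hz
    have hci : c i ∈ E i := hcmem i ⟨u, hu⟩
    have h1 : ‖K u - K (c i)‖ ≤ L_K * d :=
      (hKlip u (hsub i hu) (c i) (hsub i hci)).trans
        (mul_le_mul_of_nonneg_left (hdiam i u hu (c i) hci) hLK)
    rw [norm_smul, norm_inv, Real.norm_eq_abs, abs_of_pos hδ0]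
    calc δ⁻¹ * ‖K u - K (c i)‖ ≤ δ⁻¹ * (L_K * d) :=
          mul_le_mul_of_nonneg_left h1 (inv_nonneg.mpr hδ0.le)
      _ = 4 * L_K / (1 - γ) := by
          rw [hδ]; field_simp
  choose T hTcard hTnet using fun i => hmax (S i) (hSball i)
  set g : Fin n → Fin m → Z := fun i j => (T i).toList.getD j 0 with hg
  have hgsurj : ∀ i, ∀ w ∈ T i, ∃ j : Fin m, g i j = w := by
    intro i w hw
    obtain ⟨j, hj, hjw⟩ := List.mem_iff_getElem.mp (Finset.mem_toList.mpr hw)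
    have hjm : j < m := lt_of_lt_of_le (by simpa using hj) (by simpa using hTcard i)
    refine ⟨⟨j, hjm⟩, ?_⟩
    rw [hg]
    simp only []
    rw [List.getD_eq_getElem _ _ (by simpa using hj)]
    exact hjw
  refine ⟨fun p => M ∩ (V '' {u ∈ E p.1 |
      nZ (δ⁻¹ • (K u - K (c p.1)) - g p.1 p.2) ≤ 1}), ?_, fun p => inter_subset_left, ?_⟩
  · intro x hx
    obtain ⟨u, huM, rfl⟩ := hMV hx
    obtain ⟨i, hui⟩ : ∃ i, u ∈ E i := by simpa using hcov huM
    obtain ⟨w, hwT, hw1⟩ := hTnet i (δ⁻¹ • (K u - K (c i))) ⟨u, hui, rfl⟩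
    obtain ⟨j, rfl⟩ := hgsurj i w hwT
    exact mem_iUnion.mpr ⟨(i, j), hx, ⟨u, ⟨hui, hw1⟩, rfl⟩⟩
  · rintro ⟨i, j⟩ x ⟨-, u, ⟨hu, hu1⟩, rfl⟩ y ⟨-, v, ⟨hv, hv1⟩, rfl⟩
    have huM := hsub i hu
    have hvM := hsub i hv
    have hKd : nZ (K u - K v) ≤ 2 * δ := by
      have heq : K u - K v = δ • ((δ⁻¹ • (K u - K (c i)) - g i j) -
          (δ⁻¹ • (K v - K (c i)) - g i j)) := by
        rw [sub_sub_sub_cancel_right, ← smul_sub, smul_inv_smul₀ hδ0.ne']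
        abel
      rw [heq, map_smul_eq_mul, Real.norm_eq_abs, abs_of_pos hδ0]
      have := (map_sub_le_add nZ (δ⁻¹ • (K u - K (c i)) - g i j)
        (δ⁻¹ • (K v - K (c i)) - g i j))
      nlinarith
    have h2 := hqs u huM v hvM
    have h3 := hdiam i u hu v hv
    have h4 : γ * ‖u - v‖ ≤ γ * d := mul_le_mul_of_nonneg_left h3 hγ0.le
    calc ‖V u - V v‖ ≤ γ * ‖u - v‖ + nZ (K u - K v) := h2
      _ ≤ γ * d + 2 * δ := by linarith
      _ = (1 + γ)/2 * d := by rw [hδ]; ring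

omit [NormedSpace ℝ Y] in
lemma iter_cover (M : Set Y) (V : Y → Y) (hMV : M ⊆ V '' M)
    (K : Y → Z) (L_K : ℝ) (hLK : 0 ≤ L_K)
    (hKlip : ∀ u ∈ M, ∀ v ∈ M, ‖K u - K v‖ ≤ L_K * ‖u - v‖)
    (nZ : Seminorm ℝ Z) (γ : ℝ) (hγ0 : 0 < γ) (hγ1 : γ < 1)
    (hqs : ∀ v1 ∈ M, ∀ v2 ∈ M, ‖V v1 - V v2‖ ≤ γ * ‖v1 - v2‖ + nZ (K v1 - K v2))
    (m : ℕ)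
    (hmax : ∀ S : Set Z, (∀ z ∈ S, ‖z‖ ≤ 4 * L_K / (1 - γ)) →
      ∃ T : Finset Z, T.card ≤ m ∧ ∀ z ∈ S, ∃ w ∈ T, nZ (z - w) ≤ 1)
    (d0 : ℝ) (hd0 : 0 < d0)
    (hMdiam : ∀ u ∈ M, ∀ v ∈ M, ‖u - v‖ ≤ d0) :
    ∀ k : ℕ, ∃ E : Fin (m^k) → Set Y, M ⊆ ⋃ i, E i ∧ (∀ i, E i ⊆ M) ∧
      ∀ i, ∀ u ∈ E i, ∀ v ∈ E i, ‖u - v‖ ≤ ((1+γ)/2)^k * d0 := by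
  intro k
  induction k with
  | zero =>
    exact ⟨fun _ => M, fun x hx => mem_iUnion.mpr ⟨⟨0, by simp⟩, hx⟩,
      fun _ => subset_rfl, by
        intro i u hu v hv
        simpa using hMdiam u hu v hv⟩
  | succ k ih =>
    obtain ⟨E, hcov, hsub, hdiam⟩ := ih
    have hq0 : (0:ℝ) < (1+γ)/2 := by linarith
    have hdpos : (0:ℝ) < ((1+γ)/2)^k * d0 := by positivity
    obtain ⟨E', hcov', hsub', hdiam'⟩ := step_lemma M V hMV K L_K hLK hKlip nZ γ hγ0 hγ1
      hqs m hmax (((1+γ)/2)^k * d0) hdpos (m^k) E hcov hsub hdiam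
    refine ⟨fun i => E' (finProdFinEquiv.symm (Fin.cast (pow_succ m k) i)), ?_, ?_, ?_⟩
    · intro x hx
      obtain ⟨p, hp⟩ := mem_iUnion.mp (hcov' hx)
      refine mem_iUnion.mpr ⟨Fin.cast (pow_succ m k).symm (finProdFinEquiv p), ?_⟩
      have he : Fin.cast (pow_succ m k) (Fin.cast (pow_succ m k).symm (finProdFinEquiv p))
          = finProdFinEquiv p := rfl
      rw [he, Equiv.symm_apply_apply]
      exact hp
    · intro i
      exact hsub' _
    · intro i u hu v hv
      calc ‖u - v‖ ≤ (1+γ)/2 * (((1+γ)/2)^k * d0) := hdiam' _ u hu v hv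
        _ = ((1+γ)/2)^(k+1) * d0 := by rw [pow_succ]; ring

end Step

/-- quasi-stability dimension theorem, Chueshov: if `M ⊆ V(M)` is a
closed bounded set and `V` satisfies the quasi-stability estimate
`‖Vv¹-Vv²‖ ≤ γ‖v¹-v²‖ + n_Z(Kv¹-Kv²)` with `γ < 1`, `K` Lipschitz and `n_Z` a compact
seminorm, then `M` is compact with finite fractal dimension bounded by
`[ln(2/(1+γ))]⁻¹ · ln m_Z(4L_K/(1-γ))`. -/
theorem quasi_stability_finite_dimension
    {Y Z : Type*} [NormedAddCommGroup Y] [NormedSpace ℝ Y] [CompleteSpace Y]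
    [NormedAddCommGroup Z] [NormedSpace ℝ Z] [CompleteSpace Z]
    (M : Set Y) (hMb : Bornology.IsBounded M) (hMc : IsClosed M)
    (V : Y → Y) (hMV : M ⊆ V '' M)
    (K : Y → Z) (L_K : ℝ)
    (hKlip : ∀ u ∈ M, ∀ v ∈ M, ‖K u - K v‖ ≤ L_K * ‖u - v‖)
    (nZ : Seminorm ℝ Z)
    (hcomp : ∀ (z : ℕ → Z) (c : ℝ), (∀ n, ‖z n‖ ≤ c) →
      ∃ σ : ℕ → ℕ, StrictMono σ ∧
        ∀ ε : ℝ, 0 < ε → ∃ N, ∀ m, N ≤ m → ∀ n, N ≤ n → nZ (z (σ m) - z (σ n)) < ε)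
    (γ : ℝ) (hγ0 : 0 < γ) (hγ1 : γ < 1)
    (hqs : ∀ v1 ∈ M, ∀ v2 ∈ M, ‖V v1 - V v2‖ ≤ γ * ‖v1 - v2‖ + nZ (K v1 - K v2)) :
    IsCompact M ∧
      fractalDim M ≤ (Real.log (2 / (1 + γ)))⁻¹ *
        Real.log ((mZ (fun z => nZ z) (4 * L_K / (1 - γ))).toNat : ℝ) := by
  classical
  obtain ⟨F, hF⟩ := net_exists nZ hcomp (4 * L_K / (1 - γ))
  have hRHS0 : 0 ≤ (Real.log (2 / (1 + γ)))⁻¹ *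
      Real.log ((mZ (fun z => nZ z) (4 * L_K / (1 - γ))).toNat : ℝ) := by
    apply mul_nonneg
    · apply inv_nonneg.mpr (Real.log_nonneg ?_)
      rw [le_div_iff₀ (by linarith)]; linarith
    · exact Real.log_natCast_nonneg _
  by_cases hMsub : M.Subsingleton
  · refine ⟨hMsub.finite.isCompact, ?_⟩
    have hev : ∀ᶠ ε in 𝓝[>] (0:ℝ),
        Real.log ((covN M ε).toNat : ℝ) / Real.log (1/ε) = 0 := by
      filter_upwards [self_mem_nhdsWithin] with ε hε
      have hε0 : (0:ℝ) < ε := hε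
      have hcov1 : covN M ε ≤ 1 := by
        rcases Set.eq_empty_or_nonempty M with rfl | ⟨p, hp⟩
        · calc covN ∅ ε ≤ ((∅ : Finset Y).card : ℕ∞) := iInf₂_le ∅ (by simp)
            _ ≤ 1 := by simp
        · have hsubp : M ⊆ ⋃ x ∈ ({p} : Finset Y), Metric.closedBall x ε := by
            intro x hx
            have hxp : x = p := hMsub hx hp
            subst hxp
            simp [hε0.le]
          have h2 : covN M ε ≤ (({p} : Finset Y).card : ℕ∞) :=
            iInf₂_le (f := fun (s : Finset Y) (_ : M ⊆ ⋃ x ∈ s, Metric.closedBall x ε) =>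
              (s.card : ℕ∞)) {p} hsubp
          simpa using h2
      have h1 : (covN M ε).toNat ≤ 1 := by
        have := ENat.toNat_le_toNat hcov1 (by simp)
        simpa using this
      rcases Nat.le_one_iff_eq_zero_or_eq_one.mp h1 with h | h <;> simp [h]
    rw [fractalDim]
    calc limsup _ _ = limsup (fun _ : ℝ => (0:ℝ)) (𝓝[>] (0:ℝ)) := limsup_congr hev
      _ = 0 := limsup_const 0
      _ ≤ _ := hRHS0
  · rw [Set.not_subsingleton_iff] at hMsub
    obtain ⟨u0, hu0, v0, hv0, huv⟩ := hMsub
    have hMne : M.Nonempty := ⟨u0, hu0⟩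
    have hLK : 0 ≤ L_K := by
      have h1 := hKlip u0 hu0 v0 hv0
      have h2 : 0 < ‖u0 - v0‖ := by
        rw [norm_sub_pos_iff]; exact huv
      nlinarith [norm_nonneg (K u0 - K v0)]
    have h1γ : (0:ℝ) < 1 - γ := by linarith
    have hR0 : 0 ≤ 4 * L_K / (1 - γ) := by positivity
    set m : ℕ := (mZ (fun z => nZ z) (4 * L_K / (1 - γ))).toNat with hmdef
    have hmZne := mZ_ne_top nZ (4 * L_K / (1 - γ)) hF
    have hm1 : 1 ≤ m := by
      have h1 : (1:ℕ∞) ≤ mZ (fun z => nZ z) (4 * L_K / (1 - γ)) := by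
        have := le_iSup₂ (f := fun (s : Finset Z)
            (_ : (∀ z ∈ s, ‖z‖ ≤ 4 * L_K / (1 - γ)) ∧
              ∀ z ∈ s, ∀ w ∈ s, z ≠ w → 1 < nZ (z - w)) => (s.card : ℕ∞))
          ({0} : Finset Z) ⟨by simpa using hR0, by simp⟩
        simpa [mZ] using this
      have := ENat.toNat_le_toNat h1 hmZne
      simpa using this
    have hmax : ∀ S : Set Z, (∀ z ∈ S, ‖z‖ ≤ 4 * L_K / (1 - γ)) →
        ∃ T : Finset Z, T.card ≤ m ∧ ∀ z ∈ S, ∃ w ∈ T, nZ (z - w) ≤ 1 := by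
      intro S hS
      obtain ⟨T, _, _, hTc, hTnet⟩ := exists_max_sep nZ (4 * L_K / (1 - γ)) hF S hS
      exact ⟨T, hTc, hTnet⟩
    obtain ⟨C, hC⟩ := Metric.isBounded_iff.mp hMb
    set d0 : ℝ := max C 1 with hd0def
    have hd0 : 0 < d0 := lt_of_lt_of_le one_pos (le_max_right _ _)
    have hMdiam : ∀ u ∈ M, ∀ v ∈ M, ‖u - v‖ ≤ d0 := fun u hu v hv => by
      rw [← dist_eq_norm]; exact (hC hu hv).trans (le_max_left _ _)
    have hiter := iter_cover M V hMV K L_K hLK hKlip nZ γ hγ0 hγ1 hqs m hmax d0 hd0 hMdiam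
    set q : ℝ := (1+γ)/2 with hqdef
    have hq0 : 0 < q := by rw [hqdef]; linarith
    have hq1 : q < 1 := by rw [hqdef]; linarith
    have hcovN : ∀ ε : ℝ, ∀ k : ℕ, q^k * d0 ≤ ε → covN M ε ≤ ((m^k : ℕ) : ℕ∞) := by
      intro ε k hk
      obtain ⟨E, hcov, hsub, hdiam⟩ := hiter k
      exact covN_le_of_cover M hk (m^k) E hcov hdiam
    constructor
    · apply TotallyBounded.isCompact_of_isClosed _ hMc
      rw [Metric.totallyBounded_iff]
      intro ε hε
      obtain ⟨k, hk⟩ := exists_pow_lt_of_lt_one (div_pos (half_pos hε) hd0) hq1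
      have hkd : q^k * d0 ≤ ε/2 := by
        have h2 := mul_lt_mul_of_pos_right hk hd0
        rw [div_mul_cancel₀ _ hd0.ne'] at h2
        exact h2.le
      obtain ⟨E, hcov, hsub, hdiam⟩ := hiter k
      obtain ⟨s, hsc, hscov⟩ := ball_cover_of_cover M hkd (m^k) E hcov hdiam
      refine ⟨↑s, s.finite_toSet, hscov.trans ?_⟩
      exact iUnion₂_mono fun x _ => Metric.closedBall_subset_ball (by linarith)
    · set Dm : ℝ := Real.log (m : ℝ) with hDmdef
      have hDm0 : 0 ≤ Dm := Real.log_natCast_nonneg m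
      set lq : ℝ := Real.log (2/(1+γ)) with hlqdef
      have hqinv : (2:ℝ)/(1+γ) = q⁻¹ := by
        rw [hqdef]; field_simp
      have hlq0 : 0 < lq := by
        rw [hlqdef]
        apply Real.log_pos
        rw [lt_div_iff₀ (by linarith)]; linarith
      have hlqq : lq = -Real.log q := by rw [hlqdef, hqinv, Real.log_inv]
      set D : ℝ := lq⁻¹ * Dm with hDdef
      have hbound : ∀ η : ℝ, 0 < η → ∀ᶠ ε in 𝓝[>] (0:ℝ),
          Real.log ((covN M ε).toNat : ℝ) / Real.log (1/ε) ≤ D + η := by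
        intro η hη
        set C₁ : ℝ := Dm + Real.log d0 * Dm / lq with hC₁def
        set L0 : ℝ := max 1 (|C₁| / η) with hL0def
        have hL01 : 1 ≤ L0 := le_max_left _ _
        have hev1 : ∀ᶠ ε in 𝓝[>] (0:ℝ), ε < min d0 (Real.exp (-L0)) :=
          eventually_nhdsWithin_of_eventually_nhds
            (gt_mem_nhds (lt_min hd0 (Real.exp_pos _)))
        filter_upwards [hev1, self_mem_nhdsWithin] with ε hεlt hεmem
        have hε0 : (0:ℝ) < ε := hεmem
        have hεd0 : ε < d0 := hεlt.trans_le (min_le_left _ _)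
        have hεe : ε < Real.exp (-L0) := hεlt.trans_le (min_le_right _ _)
        set L : ℝ := Real.log (1/ε) with hLdef
        have hLe : L = -Real.log ε := by rw [hLdef, one_div, Real.log_inv]
        have hLL0 : L0 ≤ L := by
          have h3 := Real.log_le_log hε0 hεe.le
          rw [Real.log_exp] at h3
          rw [hLe]; linarith
        have hLpos : 0 < L := lt_of_lt_of_le (lt_of_lt_of_le one_pos hL01) hLL0
        have hex : ∃ k : ℕ, q^k * d0 ≤ ε := by
          obtain ⟨k, hk⟩ := exists_pow_lt_of_lt_one (div_pos hε0 hd0) hq1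
          refine ⟨k, ?_⟩
          have h2 := mul_lt_mul_of_pos_right hk hd0
          rw [div_mul_cancel₀ _ hd0.ne'] at h2
          exact h2.le
        set k : ℕ := Nat.find hex with hkdef
        have hk := Nat.find_spec hex
        have hk1 : 1 ≤ k := by
          rcases Nat.eq_zero_or_pos k with hk0 | hk0
          · exfalso
            have h' := hk
            rw [← hkdef] at h'
            rw [hk0, pow_zero, one_mul] at h'
            linarith
          · exact hk0
        have hkm : ¬ (q^(k-1) * d0 ≤ ε) := Nat.find_min hex (by omega)
        push_neg at hkm
        have hlogε : Real.log ε < ((k-1 : ℕ) : ℝ) * Real.log q + Real.log d0 := by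
          have h1 := Real.log_lt_log hε0 hkm
          rwa [Real.log_mul (pow_ne_zero _ hq0.ne') hd0.ne', Real.log_pow] at h1
        have hkR : (k : ℝ) ≤ 1 + (Real.log d0 + L)/lq := by
          have hcast : ((k-1 : ℕ) : ℝ) = (k:ℝ) - 1 := by
            rw [Nat.cast_sub hk1]; simp
          rw [hcast] at hlogε
          have h2 : ((k:ℝ)-1) * lq < Real.log d0 + L := by
            rw [hlqq, hLe]; nlinarith
          have h3 : (k:ℝ) - 1 ≤ (Real.log d0 + L)/lq := by
            rw [le_div_iff₀ hlq0]; linarith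
          linarith
        have hcov := hcovN ε k hk
        have htop : ((m^k : ℕ) : ℕ∞) ≠ ⊤ := by
          exact_mod_cast ENat.coe_ne_top _
        have htn : (covN M ε).toNat ≤ m^k := by
          have := ENat.toNat_le_toNat hcov htop
          simpa only [ENat.toNat_coe] using this
        have h1n : 1 ≤ (covN M ε).toNat := by
          have := ENat.toNat_le_toNat (one_le_covN M hMne ε) (ne_top_of_le_ne_top htop hcov)
          simpa using this
        have hflog : Real.log ((covN M ε).toNat : ℝ) ≤ (k:ℝ) * Dm := by
          have hstep : Real.log ((covN M ε).toNat : ℝ) ≤ Real.log ((m^k : ℕ) : ℝ) := by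
            apply Real.log_le_log
            · exact_mod_cast Nat.lt_of_lt_of_le Nat.zero_lt_one h1n
            · exact_mod_cast htn
          have hstep2 : Real.log ((m^k : ℕ) : ℝ) = (k:ℝ) * Dm := by
            rw [hDmdef, Nat.cast_pow, Real.log_pow]
          linarith
        have hC1 : C₁ ≤ η * L := by
          have h1 : |C₁| / η ≤ L0 := le_max_right _ _
          have h2 : |C₁| ≤ L0 * η := (div_le_iff₀ hη).mp h1
          calc C₁ ≤ |C₁| := le_abs_self _
            _ ≤ L0 * η := h2
            _ ≤ L * η := mul_le_mul_of_nonneg_right hLL0 hη.le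
            _ = η * L := mul_comm _ _
        have heq : (1 + (Real.log d0 + L)/lq) * Dm = C₁ + D * L := by
          rw [hC₁def, hDdef]; field_simp; ring
        rw [div_le_iff₀ hLpos]
        calc Real.log ((covN M ε).toNat : ℝ) ≤ (k:ℝ) * Dm := hflog
          _ ≤ (1 + (Real.log d0 + L)/lq) * Dm := mul_le_mul_of_nonneg_right hkR hDm0
          _ = C₁ + D * L := heq
          _ ≤ η * L + D * L := by linarith
          _ = (D + η) * L := by ring
      have hge : ∀ᶠ ε in 𝓝[>] (0:ℝ),
          (0:ℝ) ≤ Real.log ((covN M ε).toNat : ℝ) / Real.log (1/ε) := by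
        have hev1 : ∀ᶠ ε in 𝓝[>] (0:ℝ), ε < 1 :=
          eventually_nhdsWithin_of_eventually_nhds (gt_mem_nhds one_pos)
        filter_upwards [hev1, self_mem_nhdsWithin] with ε hε1 hεmem
        have hε0 : (0:ℝ) < ε := hεmem
        apply div_nonneg (Real.log_natCast_nonneg _)
        apply Real.log_nonneg
        rw [le_div_iff₀ hε0]; linarith
      have hcb : IsBoundedUnder (· ≥ ·) (𝓝[>] (0:ℝ))
          (fun ε : ℝ => Real.log ((covN M ε).toNat : ℝ) / Real.log (1/ε)) :=
        ⟨0, eventually_map.mpr hge⟩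
      have hfin : ∀ η : ℝ, 0 < η → fractalDim M ≤ D + η := by
        intro η hη
        rw [fractalDim]
        exact limsup_le_of_le hcb.isCoboundedUnder_le (hbound η hη)
      have hfinal : fractalDim M ≤ D := le_of_forall_pos_le_add hfin
      exact hfinal
end
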